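/- arXiv:2401.02883 — 3 statements merged into one kernel-verified Lean document; each statement's English description precedes it below -/
import Mathlib

section
/- Let K* ⊆ ℝⁿ and let T* : K* → ℝ be nonnegative, with Epi(T*) = {(x,t) ∈ K* × ℝ : t ≥ T*(x)} ⊆ ℝⁿ⁺¹. For each p ∈ ℕ let K_p ⊆ ℝⁿ, let T_p : K_p → ℝ be nonnegative with Epi(T_p) = {(x,t) ∈ K_p × ℝ : t ≥ T_p(x)}, and let η_p > 0 with η_p → 0. Suppose: (i) for every p, Epi(T*) ⊆ Epi(T_p) + η_pB̄ₙ₊₁; and (ii) for every strictly increasing sequence (p_j) and every sequence of points z_j ∈ Epi(T_{p_j}) + η_{p_j}B̄ₙ₊₁ converging in ℝⁿ⁺¹ to a point z, one has z ∈ Epi(T*). Then for every x ∈ K*, the sets (x + η_pB̄ₙ) ∩ K_p are nonempty and lim_{p→∞} inf_{x' ∈ (x+η_pB̄ₙ)∩K_p} T_p(x') = T*(x). -/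
/-!
Testing (i) at `(x, T*(x))` yields points of `K_p` within `η_p` of `x` where
`T_p ≤ T*(x) + η_p`, so the infima are eventually below every level above `T*(x)`.
Conversely, if infinitely many infima were below some `c < T*(x)`, then `(x, c)` would lie in
infinitely many dilated epigraphs, hence (by (ii), applied to a constant sequence) in `Epi(T*)`,
which is absurd.
-/

open Metric Pointwise Filter

/-- The Euclidean space `ℝⁿ⁺¹ = ℝⁿ × ℝ` with the Euclidean (ℓ²) norm. -/
abbrev EuclideanProd (n : ℕ) := WithLp 2 (EuclideanSpace ℝ (Fin n) × ℝ)

/-- The epigraph of `T : K → ℝ`, viewed as a subset of `ℝⁿ⁺¹`. -/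
def epigraph {n : ℕ} (K : Set (EuclideanSpace ℝ (Fin n)))
    (T : EuclideanSpace ℝ (Fin n) → ℝ) : Set (EuclideanProd n) :=
  {p | (WithLp.equiv 2 (EuclideanSpace ℝ (Fin n) × ℝ) p).1 ∈ K ∧
      T (WithLp.equiv 2 (EuclideanSpace ℝ (Fin n) × ℝ) p).1 ≤
        (WithLp.equiv 2 (EuclideanSpace ℝ (Fin n) × ℝ) p).2}

/-- The sequential Kuratowski upper limit. -/
def seqUpperLimit {X : Type*} [TopologicalSpace X] (S : ℕ → Set X) : Set X :=
  {w | ∃ φ : ℕ → ℕ, StrictMono φ ∧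
    ∃ z : ℕ → X, (∀ j, z j ∈ S (φ j)) ∧ Tendsto z atTop (nhds w)}

lemma mem_seqUpperLimit_of_frequently_mem {X : Type*} [TopologicalSpace X]
    {S : ℕ → Set X} {w : X} (hw : ∃ᶠ p in atTop, w ∈ S p) : w ∈ seqUpperLimit S :=
  let ⟨φ, hφ, hwφ⟩ := extraction_of_frequently_atTop hw
  ⟨φ, hφ, fun _ ↦ w, hwφ, tendsto_const_nhds⟩

section DilatedEpigraph

variable {n : ℕ} {K : Set (EuclideanSpace ℝ (Fin n))} {T : EuclideanSpace ℝ (Fin n) → ℝ}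
  {x : EuclideanSpace ℝ (Fin n)} {s r : ℝ}

lemma exists_near_of_toLp_mem_epigraph_add_closedBall
    (h : WithLp.toLp 2 (x, s) ∈ epigraph K T + closedBall (0 : EuclideanProd n) r) :
    ∃ y ∈ closedBall x r ∩ K, T y ≤ s + r := by
  obtain ⟨a, ⟨haK, hTa⟩, b, hb, hab⟩ := h
  replace hab : a + b = WithLp.toLp 2 (x, s) := hab
  replace hTa : T a.fst ≤ a.snd := hTa
  rw [mem_closedBall_zero_iff] at hb
  have hx : x = a.fst + b.fst := by rw [← WithLp.add_fst, hab]; rfl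
  have hs : s = a.snd + b.snd := by rw [← WithLp.add_snd, hab]; rfl
  refine ⟨a.fst, ⟨?_, haK⟩, ?_⟩
  · rw [mem_closedBall, dist_comm, dist_eq_norm, hx, add_sub_cancel_left]
    exact (WithLp.norm_fst_le _ b).trans hb
  · have : -b.snd ≤ r := (neg_le_abs _).trans ((WithLp.norm_snd_le _ b).trans hb)
    linarith

lemma toLp_mem_epigraph_add_closedBall {y : EuclideanSpace ℝ (Fin n)}
    (hy : y ∈ closedBall x r ∩ K) (hTy : T y ≤ s) :
    WithLp.toLp 2 (x, s) ∈ epigraph K T + closedBall (0 : EuclideanProd n) r := by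
  refine ⟨WithLp.toLp 2 (y, s), ⟨hy.2, hTy⟩, WithLp.toLp 2 (x - y, 0), ?_, ?_⟩
  · rw [mem_closedBall_zero_iff, WithLp.norm_toLp_fst, ← dist_eq_norm, dist_comm]
    exact hy.1
  · show WithLp.toLp 2 (y, s) + WithLp.toLp 2 (x - y, 0) = WithLp.toLp 2 (x, s)
    rw [← WithLp.toLp_add]
    simp

end DilatedEpigraph

theorem perturbed_inf_tendsto_Tstar_general
    {n : ℕ} (Kstar : Set (EuclideanSpace ℝ (Fin n)))
    (Tstar : EuclideanSpace ℝ (Fin n) → ℝ)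
    (K : ℕ → Set (EuclideanSpace ℝ (Fin n)))
    (T : ℕ → EuclideanSpace ℝ (Fin n) → ℝ) (hT : ∀ p, ∀ y ∈ K p, 0 ≤ T p y)
    (η : ℕ → ℝ) (hηlim : Tendsto η atTop (nhds 0))
    (hlow : ∀ p, epigraph Kstar Tstar ⊆
      epigraph (K p) (T p) + closedBall (0 : EuclideanProd n) (η p))
    (hupper : ∀ φ : ℕ → ℕ, StrictMono φ →
      ∀ (z : ℕ → EuclideanProd n) (zlim : EuclideanProd n),
        (∀ j, z j ∈ epigraph (K (φ j)) (T (φ j)) +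
          closedBall (0 : EuclideanProd n) (η (φ j))) →
        Tendsto z atTop (nhds zlim) → zlim ∈ epigraph Kstar Tstar) :
    ∀ x ∈ Kstar, (∀ p, (closedBall x (η p) ∩ K p).Nonempty) ∧
      Tendsto (fun p => sInf (T p '' (closedBall x (η p) ∩ K p))) atTop
        (nhds (Tstar x)) := by
  intro x hx
  have near p : ∃ y ∈ closedBall x (η p) ∩ K p, T p y ≤ Tstar x + η p :=
    exists_near_of_toLp_mem_epigraph_add_closedBall (hlow p ⟨hx, le_rfl⟩)
  have hne p : (closedBall x (η p) ∩ K p).Nonempty := (near p).imp fun _ ↦ And.left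
  have hbdd p : BddBelow (T p '' (closedBall x (η p) ∩ K p)) :=
    ⟨0, by rintro _ ⟨y, hy, rfl⟩; exact hT p y hy.2⟩
  refine ⟨hne, tendsto_order.2 ⟨fun b hb ↦ ?_, fun b hb ↦ ?_⟩⟩
  · have hlim : seqUpperLimit (fun p ↦ epigraph (K p) (T p) +
        closedBall (0 : EuclideanProd n) (η p)) ⊆ epigraph Kstar Tstar :=
      fun _ ⟨φ, hφ, z, hz, hzw⟩ ↦ hupper φ hφ z _ hz hzw
    by_contra hfreq
    obtain ⟨c, hbc, hcT⟩ := exists_between hb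
    have hc : ∃ᶠ p in atTop, WithLp.toLp 2 (x, c) ∈
        epigraph (K p) (T p) + closedBall (0 : EuclideanProd n) (η p) := by
      refine (not_eventually.1 hfreq).mono fun p hp ↦ ?_
      obtain ⟨_, ⟨y, hy, rfl⟩, hyc⟩ :=
        exists_lt_of_csInf_lt ((hne p).image _) ((not_lt.1 hp).trans_lt hbc)
      exact toLp_mem_epigraph_add_closedBall hy hyc.le
    exact hcT.not_ge (hlim (mem_seqUpperLimit_of_frequently_mem hc)).2
  · filter_upwards [hηlim.eventually (gt_mem_nhds (sub_pos.2 hb))] with p hp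
    obtain ⟨y, hy, hTy⟩ := near p
    linarith [csInf_le (hbdd p) (Set.mem_image_of_mem (T p) hy)]

/-- Pointwise convergence of approximate minimal-time functions under epigraphic
convergence: if (i) each dilated epigraph `Epi(T_p) + η_pB̄` contains `Epi(T*)` and
(ii) the Kuratowski upper limit of the dilated epigraphs is contained in `Epi(T*)`,
then for every `x ∈ K*` the perturbed minima `inf_{x' ∈ (x+η_pB̄)∩K_p} T_p(x')`
are well defined and converge to `T*(x)`. -/
theorem perturbed_inf_tendsto_Tstar
    {n : ℕ} (Kstar : Set (EuclideanSpace ℝ (Fin n)))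
    (Tstar : EuclideanSpace ℝ (Fin n) → ℝ) (hTstar : ∀ y ∈ Kstar, 0 ≤ Tstar y)
    (K : ℕ → Set (EuclideanSpace ℝ (Fin n)))
    (T : ℕ → EuclideanSpace ℝ (Fin n) → ℝ) (hT : ∀ p, ∀ y ∈ K p, 0 ≤ T p y)
    (η : ℕ → ℝ) (hηpos : ∀ p, 0 < η p) (hηlim : Tendsto η atTop (nhds 0))
    (hlow : ∀ p, epigraph Kstar Tstar ⊆
      epigraph (K p) (T p) + closedBall (0 : EuclideanProd n) (η p))
    (hupper : ∀ φ : ℕ → ℕ, StrictMono φ →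
      ∀ (z : ℕ → EuclideanProd n) (zlim : EuclideanProd n),
        (∀ j, z j ∈ epigraph (K (φ j)) (T (φ j)) +
          closedBall (0 : EuclideanProd n) (η (φ j))) →
        Tendsto z atTop (nhds zlim) → zlim ∈ epigraph Kstar Tstar) :
    ∀ x ∈ Kstar, (∀ p, (closedBall x (η p) ∩ K p).Nonempty) ∧
      Tendsto (fun p => sInf (T p '' (closedBall x (η p) ∩ K p))) atTop
        (nhds (Tstar x)) :=
  perturbed_inf_tendsto_Tstar_general Kstar Tstar K T hT η hηlim hlow hupper
end

section
/- Let X be a type, let P ∈ ℕ, and consider for each k ∈ ℕ a finite set V_k ⊆ X, a pre-update staleness function F̂_k : X → ℕ, an updated set S_k ⊆ X, and a post-update staleness function F_k : X → ℕ, satisfying: V_{k-1} ⊆ V_k for all k ≥ 1; F̂_k(x) ≤ P for all x and k; F̂_k(x) = P for all x ∈ V_k \ V_{k-1} (k ≥ 1) and F̂_0(x) = P for all x ∈ V_0; F̂_k(x) = F_{k-1}(x) for all x ∈ V_{k-1} (k ≥ 1); S_k = {x ∈ V_k : F̂_k(x) = P}; F_k(x) = 0 for x ∈ S_k and F_k(x)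 = F̂_k(x) + 1 for x ∈ V_k \ S_k. Then for every k ∈ ℕ, V_{k+P} ⊆ ⋃_{ℓ=k}^{k+P} S_ℓ. -/
/-- Under asynchronous value iteration with staleness threshold `P`, every sampled state
is updated at least once within any window of `P + 1` consecutive iterations:
`V_{k+P} ⊆ ⋃_{ℓ=k}^{k+P} S_ℓ`. -/
theorem sample_updated_within_window
    {X : Type*} (P : ℕ)
    (V : ℕ → Set X) (hVfin : ∀ k, (V k).Finite)
    (Fhat Fpost : ℕ → X → ℕ) (S : ℕ → Set X)
    (hmono : ∀ k, V k ⊆ V (k + 1))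
    (hle : ∀ k x, Fhat k x ≤ P)
    (hnew : ∀ k, ∀ x ∈ V (k + 1) \ V k, Fhat (k + 1) x = P)
    (hinit : ∀ x ∈ V 0, Fhat 0 x = P)
    (hkeep : ∀ k, ∀ x ∈ V k, Fhat (k + 1) x = Fpost k x)
    (hS : ∀ k, S k = {x ∈ V k | Fhat k x = P})
    (hreset : ∀ k, ∀ x ∈ S k, Fpost k x = 0)
    (hinc : ∀ k, ∀ x ∈ V k \ S k, Fpost k x = Fhat k x + 1) :
    ∀ k, V (k + P) ⊆ ⋃ ℓ ∈ Set.Icc k (k + P), S ℓ := by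

  have hVmono : ∀ {a b : ℕ}, a ≤ b → V a ⊆ V b := by
    intro a b hab
    induction hab with
    | refl => exact fun x hx => hx
    | step h ih => exact fun x hx => hmono _ (ih hx)
  intro k x hx
  simp only [Set.mem_iUnion]
  by_cases hk : x ∈ V k
  · by_contra hcon
    push_neg at hcon
    have key : ∀ j, j ≤ P → j ≤ Fhat (k + j) x := by
      intro j hj
      induction j with
      | zero => exact Nat.zero_le _
      | succ n ih =>
        have hn := ih (Nat.le_of_succ_le hj)
        have hxV : x ∈ V (k + n) := hVmono (Nat.le_add_right k n) hk
        have hnS : x ∉ S (k + n) := hcon (k + n) ⟨Nat.le_add_right k n, by omega⟩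
        have h1 : Fpost (k + n) x = Fhat (k + n) x + 1 := hinc _ _ ⟨hxV, hnS⟩
        have h2 : Fhat (k + n + 1) x = Fpost (k + n) x := hkeep _ _ hxV
        show n + 1 ≤ Fhat (k + n + 1) x
        omega
    have h1 : Fhat (k + P) x = P := le_antisymm (hle _ _) (key P le_rfl)
    exact hcon (k + P) ⟨Nat.le_add_right _ _, le_rfl⟩
      (by rw [hS]; exact ⟨hx, h1⟩)
  · classical
    have hex : ∃ n, x ∈ V n := ⟨k + P, hx⟩
    set m := Nat.find hex with hm
    have hmV : x ∈ V m := Nat.find_spec hex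
    have hmle : m ≤ k + P := Nat.find_min' hex hx
    have hkm : k < m := by
      by_contra h
      push_neg at h
      exact hk (hVmono h hmV)
    have hm1 : x ∉ V (m - 1) := Nat.find_min hex (by omega)
    have hcons : m - 1 + 1 = m := by omega
    have hFhat : Fhat m x = P := by
      have := hnew (m - 1) x ⟨by rw [hcons]; exact hmV, hm1⟩
      rwa [hcons] at this
    exact ⟨m, ⟨le_of_lt hkm, hmle⟩, by rw [hS]; exact ⟨hmV, hFhat⟩⟩
end

section
/- Let A be a nonempty set, let g : A → ℝ be a nonnegative function, and let c ≥ 0. Let Ψ : ℝ → ℝ denote the Kruzhkov transform Ψ(t) = 1 − e^{−t}. Then Ψ(c + inf_{a∈A} g(a)) = Ψ(c) + (1 − Ψ(c)) · inf_{a∈A} Ψ(g(a)); that is, 1 − e^{−(c + inf_{a∈A} g(a))} = (1 − e^{−c}) + e^{−c} · inf_{a∈A} (1 − e^{−g(a)}). -/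
/-- The Kruzhkov transform `Ψ(t) = 1 - exp (-t)` turns the additive Bellman update
`c + inf g` into the discounted update `Ψ(c) + (1 - Ψ(c)) * inf (Ψ ∘ g)`. -/
theorem kruzhkov_transform_of_add_inf
    {A : Type*} [Nonempty A] (g : A → ℝ) (hg : ∀ a, 0 ≤ g a)
    (c : ℝ) (hc : 0 ≤ c) :
    1 - Real.exp (-(c + ⨅ a, g a)) =
      (1 - Real.exp (-c)) + Real.exp (-c) * ⨅ a, (1 - Real.exp (-(g a))) := by
  have bdd : BddBelow (Set.range g) := ⟨0, by rintro x ⟨a, rfl⟩; exact hg a⟩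
  have Mf : Monotone (fun t : ℝ => 1 - Real.exp (-t)) := by
    intro x y hxy
    simp only [sub_le_sub_iff_left]
    exact Real.exp_le_exp.2 (neg_le_neg hxy)
  have Cf : ContinuousAt (fun t : ℝ => 1 - Real.exp (-t)) (⨅ a, g a) := by
    fun_prop
  have key : (fun t : ℝ => 1 - Real.exp (-t)) (⨅ a, g a)
      = ⨅ a, (1 - Real.exp (-(g a))) :=
    Monotone.map_ciInf_of_continuousAt Cf Mf bdd
  rw [← key]
  simp only [neg_add, Real.exp_add]
  ring
end
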